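/- For any K ≥ 2 and weights w_1,...,w_K ∈ (0,1), the inequality (∑_{ℓ=1}^K w_ℓ) · (∏_{j ≠ k} (1 - w_j)) < 1 holds for every k ∈ {1,...,K}. -/

import Mathlib

/-! Since `1 - w ≤ exp (-w)`, the product over `j ≠ k` is at most `exp (-s)` with
`s = ∑_{j ≠ k} w_j`, and `(w_k + s) exp (-s) < (1 + s) exp (-s) ≤ 1` because `w_k < 1` and
`1 + s ≤ exp s`. -/

open Finset Real

theorem Real.prod_one_sub_le_exp_neg_sum {ι : Type*} (s : Finset ι) {w : ι → ℝ}
    (hw : ∀ j ∈ s, w j ≤ 1) : ∏ j ∈ s, (1 - w j) ≤ exp (-∑ j ∈ s, w j) := by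
  rw [← sum_neg_distrib, exp_sum]
  exact prod_le_prod (fun j hj => sub_nonneg.2 (hw j hj)) fun j _ => one_sub_le_exp_neg (w j)

theorem Real.add_mul_exp_neg_lt_one {c : ℝ} (hc : c < 1) (x : ℝ) : (c + x) * exp (-x) < 1 :=
  calc (c + x) * exp (-x) < (1 + x) * exp (-x) := by gcongr
    _ ≤ exp x * exp (-x) := by gcongr; linarith [add_one_le_exp x]
    _ = 1 := by rw [← exp_add, add_neg_cancel, exp_zero]

theorem add_sum_mul_prod_one_sub_lt_one {ι : Type*} (s : Finset ι) {w : ι → ℝ}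
    (hw : ∀ j ∈ s, w j ≤ 1) {c : ℝ} (hc : c < 1) :
    (c + ∑ j ∈ s, w j) * ∏ j ∈ s, (1 - w j) < 1 := by
  have hprod : 0 ≤ ∏ j ∈ s, (1 - w j) := prod_nonneg fun j hj => sub_nonneg.2 (hw j hj)
  rcases le_or_gt (c + ∑ j ∈ s, w j) 0 with hneg | hpos
  · exact (mul_nonpos_of_nonpos_of_nonneg hneg hprod).trans_lt one_pos
  · calc (c + ∑ j ∈ s, w j) * ∏ j ∈ s, (1 - w j)
        ≤ (c + ∑ j ∈ s, w j) * exp (-∑ j ∈ s, w j) :=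
          mul_le_mul_of_nonneg_left (prod_one_sub_le_exp_neg_sum s hw) hpos.le
      _ < 1 := add_mul_exp_neg_lt_one hc _

theorem stmt_0_general {K : ℕ} (w : Fin K → ℝ)
    (hw : ∀ k, w k ∈ Set.Ioo (0 : ℝ) 1) (k : Fin K) :
    (∑ ℓ, w ℓ) * ∏ j ∈ Finset.univ.erase k, (1 - w j) < 1 := by
  rw [← add_sum_erase _ _ (mem_univ k)]
  exact add_sum_mul_prod_one_sub_lt_one _ (fun j _ => (hw j).2.le) (hw k).2

/-- For any K ≥ 2 and weights w_1,...,w_K ∈ (0,1),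
    (∑_ℓ w_ℓ) · ∏_{j ≠ k} (1 - w_j) < 1 for every k. -/
theorem stmt_0 {K : ℕ} (hK : 2 ≤ K) (w : Fin K → ℝ)
    (hw : ∀ k, w k ∈ Set.Ioo (0 : ℝ) 1) (k : Fin K) :
    (∑ ℓ, w ℓ) * ∏ j ∈ Finset.univ.erase k, (1 - w j) < 1 :=
  stmt_0_general w hw k
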